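/- Let f be a greyscale of a finite simple connected graph G and let u and v be distinct vertices such that F(u,v) = max over all pairs of vertices a,b of F(a,b), and suppose f(v) ≤ f(u). Then every vertex w lying on some u–v geodesic (d(u,w) + d(w,v) = d(u,v)) satisfies f(w) = f(v) + d(w,v)·F(u,v). -/

import Mathlib

open SimpleGraph

/-- A greyscale of a graph on vertex set `V`: a map to `[0,1]` attaining both `0` and `1`. -/
def IsGreyscale {V : Type*} (f : V → ℝ) : Prop :=
  (∀ w, 0 ≤ f w ∧ f w ≤ 1) ∧ (∃ a, f a = 0) ∧ (∃ b, f b = 1)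

/-- The grey tone of an edge: the absolute difference of the tones of its endpoints. -/
noncomputable def greyTone {V : Type*} (f : V → ℝ) : Sym2 V → ℝ :=
  Sym2.lift ⟨fun a b => |f a - f b|, fun _ _ => abs_sub_comm _ _⟩

/-- The edge-colour-increase mapping `F(u,v) = |f u - f v| / d(u,v)` (and `0` on the diagonal). -/
noncomputable def ecim {V : Type*} (G : SimpleGraph V) (f : V → ℝ) (u v : V) : ℝ :=
  letI := Classical.dec (u = v)
  if u = v then 0 else |f u - f v| / (G.dist u v : ℝ)

/-- The support greyscale for antipodal vertices `u, v` of a graph of diameter `D`. -/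
noncomputable def supportGreyscale {V : Type*} (G : SimpleGraph V) (u v : V) (D : ℕ)
    (w : V) : ℝ :=
  ((G.dist w u : ℝ) - (G.dist w v : ℝ) + (D : ℝ)) / (2 * (D : ℝ))

/-!
Put `M = F(u,v)`. Maximality of `M` makes `f` an `M`-Lipschitz function for the graph distance,
while `f u - f v = M · d(u,v)`. Along a geodesic `u → w → v` the two Lipschitz bounds
`f u - f w ≤ M · d(u,w)` and `f w - f v ≤ M · d(w,v)` add up to this equality, so both are tight.
-/

namespace SimpleGraph

variable {V : Type*} {G : SimpleGraph V} {f : V → ℝ}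

theorem ecim_mul_dist {a b : V} (h : G.Reachable a b) :
    ecim G f a b * G.dist a b = |f a - f b| := by
  by_cases hab : a = b
  · simp [ecim, hab]
  · have hdist : (G.dist a b : ℝ) ≠ 0 := by exact_mod_cast (h.pos_dist_of_ne hab).ne'
    rw [ecim, if_neg hab, div_mul_cancel₀ _ hdist]

theorem Connected.abs_sub_le_mul_dist_of_forall_ecim_le (hG : G.Connected) {M : ℝ}
    (hM : ∀ a b, ecim G f a b ≤ M) (a b : V) : |f a - f b| ≤ M * G.dist a b := by
  rw [← ecim_mul_dist (hG.preconnected a b)]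
  exact mul_le_mul_of_nonneg_right (hM a b) (Nat.cast_nonneg _)

theorem apply_eq_add_mul_dist_of_geodesic {M : ℝ}
    (hlip : ∀ a b, |f a - f b| ≤ M * G.dist a b) {u v w : V}
    (hext : f u - f v = M * G.dist u v) (hw : G.dist u w + G.dist w v = G.dist u v) :
    f w = f v + G.dist w v * M := by
  have huw := (le_abs_self _).trans (hlip u w)
  have hwv := (le_abs_self _).trans (hlip w v)
  have hsum : (G.dist u w : ℝ) + G.dist w v = G.dist u v := by exact_mod_cast hw
  rw [← hsum] at hext
  linarith

end SimpleGraph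

theorem stmt_8_general {V : Type*} (G : SimpleGraph V) (hG : G.Connected)
    (f : V → ℝ) (u v : V)
    (hmax : ∀ a b : V, ecim G f a b ≤ ecim G f u v) (hle : f v ≤ f u) :
    ∀ w : V, G.dist u w + G.dist w v = G.dist u v →
      f w = f v + (G.dist w v : ℝ) * ecim G f u v := by
  intro w hw
  have hext : f u - f v = ecim G f u v * G.dist u v := by
    rw [ecim_mul_dist (hG.preconnected u v), abs_of_nonneg (sub_nonneg.2 hle)]
  exact apply_eq_add_mul_dist_of_geodesic (hG.abs_sub_le_mul_dist_of_forall_ecim_le hmax) hext hw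

theorem stmt_8 {V : Type*} [Fintype V] (G : SimpleGraph V) (hG : G.Connected)
    (f : V → ℝ) (hf : IsGreyscale f) (u v : V) (huv : u ≠ v)
    (hmax : ∀ a b : V, ecim G f a b ≤ ecim G f u v) (hle : f v ≤ f u) :
    ∀ w : V, G.dist u w + G.dist w v = G.dist u v →
      f w = f v + (G.dist w v : ℝ) * ecim G f u v :=
  stmt_8_general G hG f u v hmax hle
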